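/- Let (A,B) be a definite pencil and let x₀ be a unit vector achieving the minimum in the definition of γ(A,B). Then for the rank-one Hermitian perturbations E = (x₀^H A x₀) x₀x₀^H and F = (x₀^H B x₀) x₀x₀^H, one has √(||E||₂² + ||F||₂²) = γ(A,B) and the pencil (A−E, B−F) is not definite (its Crawford number is zero). -/

import Mathlib

open Matrix MeasureTheory ProbabilityTheory
open scoped Classical

noncomputable def specNorm {m n : Type*} [Fintype m] [Fintype n] [DecidableEq n]
    (A : Matrix m n ℂ) : ℝ :=
  ‖LinearMap.toContinuousLinearMap (Matrix.toEuclideanLin A)‖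

noncomputable def crawford {n : ℕ} (A B : Matrix (Fin n) (Fin n) ℂ) : ℝ :=
  sInf { r | ∃ x : EuclideanSpace ℂ (Fin n), ‖x‖ = 1 ∧
    r = ‖star (x : Fin n → ℂ) ⬝ᵥ (A + Complex.I • B).mulVec x‖ }

noncomputable def pencilNorm {n : ℕ} (A B : Matrix (Fin n) (Fin n) ℂ) : ℝ :=
  specNorm (Matrix.fromCols A B)

def symPseudo {n : ℕ} (ε : ℝ) (A B : Matrix (Fin n) (Fin n) ℂ) : Set ℂ :=
  { z | ∃ E F : Matrix (Fin n) (Fin n) ℂ, E.IsHermitian ∧ F.IsHermitian ∧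
      Real.sqrt (specNorm E ^ 2 + specNorm F ^ 2) ≤ ε ∧
      ∃ u : Fin n → ℂ, u ≠ 0 ∧ (A + E).mulVec u = z • (B + F).mulVec u }

noncomputable def smin {n : ℕ} (M : Matrix (Fin n) (Fin n) ℂ) : ℝ :=
  sInf { r | ∃ x : EuclideanSpace ℂ (Fin n), ‖x‖ = 1 ∧ r = ‖Matrix.toEuclideanLin M x‖ }

def pencilEigs {n : ℕ} (A B : Matrix (Fin n) (Fin n) ℂ) : Set ℝ :=
  { lam | ∃ u : Fin n → ℂ, u ≠ 0 ∧ A.mulVec u = (lam : ℂ) • B.mulVec u }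

/-! Since `A` and `B` are Hermitian, `α = x₀ᴴ A x₀` and `β = x₀ᴴ B x₀` are real, so
`|x₀ᴴ (A + iB) x₀| = √(α² + β²)`, and `‖x₀ x₀ᴴ‖₂ = 1` gives the same value for `√(‖E‖₂² + ‖F‖₂²)`.
The perturbation is built so that `x₀ᴴ (A - E) x₀ = x₀ᴴ (B - F) x₀ = 0`, so the unit vector `x₀`
witnesses Crawford number `0`. -/

section SpecNorm

variable {m n : Type*} [Fintype m] [Fintype n] [DecidableEq n]

lemma specNorm_smul (c : ℂ) (M : Matrix m n ℂ) : specNorm (c • M) = ‖c‖ * specNorm M := by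
  simp only [specNorm, _root_.map_smul, norm_smul]

lemma toContinuousLinearMap_toEuclideanLin_vecMulVec (x y : EuclideanSpace ℂ n) :
    LinearMap.toContinuousLinearMap (toEuclideanLin (vecMulVec (x : n → ℂ) (star (y : n → ℂ))))
      = InnerProductSpace.rankOne ℂ x y := by
  ext z i
  simp [toEuclideanLin, vecMulVec_mulVec, EuclideanSpace.inner_eq_star_dotProduct,
    dotProduct_comm, mul_comm]

lemma specNorm_vecMulVec (x y : EuclideanSpace ℂ n) :
    specNorm (vecMulVec (x : n → ℂ) (star (y : n → ℂ))) = ‖x‖ * ‖y‖ := by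
  rw [specNorm, toContinuousLinearMap_toEuclideanLin_vecMulVec, InnerProductSpace.norm_rankOne]

end SpecNorm

section QuadraticForm

variable {n : Type*} [Fintype n]

lemma Matrix.IsHermitian.ofReal_re_star_dotProduct_mulVec_self {A : Matrix n n ℂ}
    (hA : A.IsHermitian) (x : n → ℂ) : ((star x ⬝ᵥ A *ᵥ x).re : ℂ) = star x ⬝ᵥ A *ᵥ x :=
  Complex.conj_eq_iff_re.mp (Complex.conj_eq_iff_im.mpr (hA.im_star_dotProduct_mulVec_self x))

lemma star_dotProduct_add_I_smul_mulVec (A B : Matrix n n ℂ) (x : n → ℂ) :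
    star x ⬝ᵥ (A + Complex.I • B) *ᵥ x = star x ⬝ᵥ A *ᵥ x + Complex.I * (star x ⬝ᵥ B *ᵥ x) := by
  rw [add_mulVec, smul_mulVec, dotProduct_add, dotProduct_smul, smul_eq_mul]

lemma norm_star_dotProduct_add_I_smul_mulVec {A B : Matrix n n ℂ} (hA : A.IsHermitian)
    (hB : B.IsHermitian) (x : n → ℂ) :
    ‖star x ⬝ᵥ (A + Complex.I • B) *ᵥ x‖ =
      √(‖star x ⬝ᵥ A *ᵥ x‖ ^ 2 + ‖star x ⬝ᵥ B *ᵥ x‖ ^ 2) := by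
  rw [star_dotProduct_add_I_smul_mulVec, ← hA.ofReal_re_star_dotProduct_mulVec_self,
    ← hB.ofReal_re_star_dotProduct_mulVec_self, mul_comm, Complex.norm_add_mul_I,
    Complex.norm_real, Complex.norm_real, Real.norm_eq_abs, Real.norm_eq_abs, sq_abs, sq_abs]

lemma star_dotProduct_sub_smul_vecMulVec_mulVec_self (M : Matrix n n ℂ) {x : n → ℂ}
    (hx : star x ⬝ᵥ x = 1) :
    star x ⬝ᵥ (M - (star x ⬝ᵥ M *ᵥ x) • vecMulVec x (star x)) *ᵥ x = 0 := by
  rw [sub_mulVec, smul_mulVec, vecMulVec_mulVec, hx, dotProduct_sub, dotProduct_smul,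
    MulOpposite.op_one, one_smul, hx, smul_eq_mul, mul_one, sub_self]

end QuadraticForm

lemma EuclideanSpace.star_dotProduct_self_of_norm_eq_one {n : Type*} [Fintype n]
    {x : EuclideanSpace ℂ n} (hx : ‖x‖ = 1) : star (x : n → ℂ) ⬝ᵥ (x : n → ℂ) = 1 := by
  rw [dotProduct_comm, ← EuclideanSpace.inner_eq_star_dotProduct, inner_self_eq_norm_sq_to_K, hx]
  norm_num

section Crawford

variable {n : ℕ} {A B : Matrix (Fin n) (Fin n) ℂ}

lemma crawford_nonneg : 0 ≤ crawford A B :=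
  Real.sInf_nonneg (by rintro r ⟨x, -, rfl⟩; exact norm_nonneg _)

lemma crawford_le {x : EuclideanSpace ℂ (Fin n)} (hx : ‖x‖ = 1) :
    crawford A B ≤ ‖star (x : Fin n → ℂ) ⬝ᵥ (A + Complex.I • B) *ᵥ x‖ :=
  csInf_le ⟨0, by rintro r ⟨y, -, rfl⟩; exact norm_nonneg _⟩ ⟨x, hx, rfl⟩

lemma crawford_eq_zero_of_star_dotProduct_mulVec_eq_zero {x : EuclideanSpace ℂ (Fin n)}
    (hx : ‖x‖ = 1) (h : star (x : Fin n → ℂ) ⬝ᵥ (A + Complex.I • B) *ᵥ x = 0) :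
    crawford A B = 0 :=
  le_antisymm (by simpa [h] using crawford_le (A := A) (B := B) hx) crawford_nonneg

end Crawford

theorem crawford_distance_to_indefiniteness_general {n : ℕ} (A B : Matrix (Fin n) (Fin n) ℂ)
    (hA : A.IsHermitian) (hB : B.IsHermitian)
    (x₀ : EuclideanSpace ℂ (Fin n)) (hx₀ : ‖x₀‖ = 1)
    (hmin : ‖star (x₀ : Fin n → ℂ) ⬝ᵥ (A + Complex.I • B).mulVec x₀‖ = crawford A B) :
    Real.sqrt
        (specNorm ((star (x₀ : Fin n → ℂ) ⬝ᵥ A.mulVec x₀) •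
            vecMulVec (x₀ : Fin n → ℂ) (star (x₀ : Fin n → ℂ))) ^ 2 +
         specNorm ((star (x₀ : Fin n → ℂ) ⬝ᵥ B.mulVec x₀) •
            vecMulVec (x₀ : Fin n → ℂ) (star (x₀ : Fin n → ℂ))) ^ 2) = crawford A B ∧
    crawford
      (A - (star (x₀ : Fin n → ℂ) ⬝ᵥ A.mulVec x₀) •
          vecMulVec (x₀ : Fin n → ℂ) (star (x₀ : Fin n → ℂ)))
      (B - (star (x₀ : Fin n → ℂ) ⬝ᵥ B.mulVec x₀) •
          vecMulVec (x₀ : Fin n → ℂ) (star (x₀ : Fin n → ℂ))) = 0 := by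
  have hunit := EuclideanSpace.star_dotProduct_self_of_norm_eq_one hx₀
  constructor
  · simp only [specNorm_smul, specNorm_vecMulVec, hx₀, mul_one]
    rw [← hmin, norm_star_dotProduct_add_I_smul_mulVec hA hB]
  · refine crawford_eq_zero_of_star_dotProduct_mulVec_eq_zero hx₀ ?_
    rw [star_dotProduct_add_I_smul_mulVec, star_dotProduct_sub_smul_vecMulVec_mulVec_self A hunit,
      star_dotProduct_sub_smul_vecMulVec_mulVec_self B hunit, mul_zero, add_zero]

theorem crawford_distance_to_indefiniteness {n : ℕ} (A B : Matrix (Fin n) (Fin n) ℂ)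
    (hA : A.IsHermitian) (hB : B.IsHermitian) (hdef : 0 < crawford A B)
    (x₀ : EuclideanSpace ℂ (Fin n)) (hx₀ : ‖x₀‖ = 1)
    (hmin : ‖star (x₀ : Fin n → ℂ) ⬝ᵥ (A + Complex.I • B).mulVec x₀‖ = crawford A B) :
    Real.sqrt
        (specNorm ((star (x₀ : Fin n → ℂ) ⬝ᵥ A.mulVec x₀) •
            vecMulVec (x₀ : Fin n → ℂ) (star (x₀ : Fin n → ℂ))) ^ 2 +
         specNorm ((star (x₀ : Fin n → ℂ) ⬝ᵥ B.mulVec x₀) •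
            vecMulVec (x₀ : Fin n → ℂ) (star (x₀ : Fin n → ℂ))) ^ 2) = crawford A B ∧
    crawford
      (A - (star (x₀ : Fin n → ℂ) ⬝ᵥ A.mulVec x₀) •
          vecMulVec (x₀ : Fin n → ℂ) (star (x₀ : Fin n → ℂ)))
      (B - (star (x₀ : Fin n → ℂ) ⬝ᵥ B.mulVec x₀) •
          vecMulVec (x₀ : Fin n → ℂ) (star (x₀ : Fin n → ℂ))) = 0 :=
  crawford_distance_to_indefiniteness_general A B hA hB x₀ hx₀ hmin
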